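/- With M and ν as above, any normal vector field along M of the form θ ↦ f(θ) ν(θ) with f(θ) = α cos θ + β sin θ + γ (γ ≠ 0, or more generally f not of the pure form α cos θ + β sin θ) cannot be realized as the normal component of the restriction to M of any Killing vector field on S². In particular, the constant normal field θ ↦ ν(θ) is not the normal part of any Killing field of S² along M, when r ≠ π/2. -/
import Mathlib

open Matrix Real

noncomputable def latPt (r θ : ℝ) : Fin 3 → ℝ :=
  ![Real.cos θ * Real.sin r, Real.sin θ * Real.sin r, Real.cos r]

noncomputable def latNu (r θ : ℝ) : Fin 3 → ℝ :=
  ![Real.cos θ * Real.cos r, Real.sin θ * Real.cos r, -Real.sin r]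

lemma key_triple (r θ : ℝ) (a : Fin 3 → ℝ) :
    (crossProduct a (latPt r θ)) ⬝ᵥ latNu r θ =
      a 1 * Real.cos θ + (-(a 0)) * Real.sin θ := by
  have hs := Real.sin_sq_add_cos_sq r
  simp only [latPt, latNu, cross_apply, dotProduct, Fin.sum_univ_three]
  simp [Matrix.cons_val_zero, Matrix.cons_val_one]
  linear_combination (a 1 * Real.cos θ - a 0 * Real.sin θ) * hs

/-- A normal field `θ ↦ f(θ) ν(θ)` along the latitude circle whose coefficient `f` is not of
the pure form `α cos θ + β sin θ` is not the normal component of any Killing field `p ↦ a × p`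
of `S²`; in particular the constant normal field `θ ↦ ν(θ)` is not. -/
theorem non_pure_trig_normal_field_not_killing
    (r : ℝ) (hr : r ∈ Set.Ioo 0 (π / 2)) (f : ℝ → ℝ)
    (hf : ¬ ∃ α β : ℝ, ∀ θ : ℝ, f θ = α * Real.cos θ + β * Real.sin θ) :
    (¬ ∃ a : Fin 3 → ℝ, ∀ θ : ℝ, (crossProduct a (latPt r θ)) ⬝ᵥ latNu r θ = f θ) ∧
    ¬ ∃ a : Fin 3 → ℝ, ∀ θ : ℝ, (crossProduct a (latPt r θ)) ⬝ᵥ latNu r θ = 1 := by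
  constructor
  · rintro ⟨a, ha⟩
    exact hf ⟨a 1, -(a 0), fun θ => by rw [← ha θ, key_triple]⟩
  · rintro ⟨a, ha⟩
    have h0 := ha 0
    have hpi := ha π
    rw [key_triple] at h0 hpi
    simp at h0 hpi
    linarith
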